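/- arXiv:cs/9901015 — 2 statements merged into one kernel-verified Lean document; each statement's English description precedes it below -/
import Mathlib

section
/- Let A be a finite set of size q, l ≥ 1, and let X be a function A^l → [0,1] with ∑_x X(x) ≤ 1. Suppose X = λY + (1−λ)Z pointwise for λ ∈ [0,1] and functions Y, Z : A^l → [0,1] each summing to at most 1, where Y vanishes on all but at most d·m·q^{l−1} points of A^l. Then θ_{A^l}(X) ≤ 1 − λ(1 − dm/q) + 2√(dm/q), provided dm ≤ q. -/
open scoped Classical

set_option maxHeartbeats 1000000

lemma my_sqrt_add_le (a b : ℝ) (ha : 0 ≤ a) (hb : 0 ≤ b) :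
    Real.sqrt (a + b) ≤ Real.sqrt a + Real.sqrt b := by
  have h : Real.sqrt (a + b) ≤ Real.sqrt ((Real.sqrt a + Real.sqrt b) ^ 2) :=
    Real.sqrt_le_sqrt (by nlinarith [Real.sq_sqrt ha, Real.sq_sqrt hb, Real.sqrt_nonneg a, Real.sqrt_nonneg b])
  rwa [Real.sqrt_sq (by positivity)] at h

theorem theta_X_bound {α : Type*} [Fintype α] (q l m d : ℕ)
    (hq : Fintype.card α = q) (hl : 0 < l) (hdmq : d * m ≤ q)
    (X Y Z : (Fin l → α) → ℝ)
    (hX0 : ∀ x, 0 ≤ X x) (hX1 : ∀ x, X x ≤ 1)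
    (hY0 : ∀ x, 0 ≤ Y x) (hY1 : ∀ x, Y x ≤ 1)
    (hZ0 : ∀ x, 0 ≤ Z x) (hZ1 : ∀ x, Z x ≤ 1)
    (hXsum : ∑ x : Fin l → α, X x ≤ 1)
    (hYsum : ∑ x : Fin l → α, Y x ≤ 1)
    (hZsum : ∑ x : Fin l → α, Z x ≤ 1)
    (lam : ℝ) (hlam0 : 0 ≤ lam) (hlam1 : lam ≤ 1)
    (hcomb : ∀ x, X x = lam * Y x + (1 - lam) * Z x)
    (hsupp : (Finset.univ.filter (fun x : Fin l → α => Y x ≠ 0)).card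
      ≤ d * m * q ^ (l - 1)) :
    (1 / ((q : ℝ) ^ l)) * (∑ x : Fin l → α, Real.sqrt (X x)) ^ 2
      ≤ 1 - lam * (1 - (d * m : ℝ) / q) + 2 * Real.sqrt ((d * m : ℝ) / q) := by
  rcases Nat.eq_zero_or_pos q with hq0 | hqpos
  · -- q = 0 : α is empty, all sums are 0, LHS = 0
    subst hq0
    have hdm0 : d * m = 0 := Nat.le_zero.mp hdmq
    have hα : IsEmpty α := by
      rw [← Fintype.card_eq_zero_iff]; exact hq
    have hE : IsEmpty (Fin l → α) := by
      refine ⟨fun f => ?_⟩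
      exact hα.false (f ⟨0, hl⟩)
    rw [Finset.univ_eq_empty, Finset.sum_empty]
    simp [hdm0]
    nlinarith [Real.sqrt_nonneg (0:ℝ)]
  · have hq0 : (0:ℝ) < q := by exact_mod_cast hqpos
    set N : ℝ := (q : ℝ) ^ l with hN
    have hN0 : 0 < N := by positivity
    set c : ℝ := (d * m : ℝ) / q with hc
    have hc0 : 0 ≤ c := by positivity
    have hc1 : c ≤ 1 := by
      rw [hc, div_le_one hq0]; exact_mod_cast hdmq
    -- support bound: d*m*q^(l-1) = c * N
    have hcN : ((d * m * q ^ (l - 1) : ℕ) : ℝ) = c * N := by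
      push_cast
      rw [hc, hN]
      have : (q:ℝ) ^ l = q * (q:ℝ) ^ (l - 1) := by
        rw [← pow_succ']
        congr 1
        omega
      rw [this]
      field_simp
    set t := Finset.univ.filter (fun x : Fin l → α => Y x ≠ 0) with ht
    -- SY bound
    have hSYeq : ∑ x : Fin l → α, Real.sqrt (Y x) = ∑ x ∈ t, Real.sqrt (Y x) := by
      refine (Finset.sum_subset (Finset.subset_univ t) fun x _ hx => ?_).symm
      simp only [ht, Finset.mem_filter, Finset.mem_univ, true_and, not_not] at hx
      simp [hx]
    have hSYsq : (∑ x : Fin l → α, Real.sqrt (Y x)) ^ 2 ≤ c * N := by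
      rw [hSYeq]
      calc (∑ x ∈ t, Real.sqrt (Y x)) ^ 2 ≤ t.card * ∑ x ∈ t, (Real.sqrt (Y x)) ^ 2 :=
            sq_sum_le_card_mul_sum_sq
        _ = t.card * ∑ x ∈ t, Y x := by
            congr 1; exact Finset.sum_congr rfl fun x _ => Real.sq_sqrt (hY0 x)
        _ ≤ (c * N) * 1 := by
            apply mul_le_mul
            · rw [← hcN]; exact_mod_cast hsupp
            · calc ∑ x ∈ t, Y x ≤ ∑ x : Fin l → α, Y x :=
                    Finset.sum_le_sum_of_subset_of_nonneg (Finset.subset_univ t)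
                      (fun x _ _ => hY0 x)
                _ ≤ 1 := hYsum
            · exact Finset.sum_nonneg fun x _ => hY0 x
            · positivity
        _ = c * N := mul_one _
    have hSZsq : (∑ x : Fin l → α, Real.sqrt (Z x)) ^ 2 ≤ N := by
      calc (∑ x : Fin l → α, Real.sqrt (Z x)) ^ 2
          ≤ (Finset.univ.card : ℝ) * ∑ x : Fin l → α, (Real.sqrt (Z x)) ^ 2 :=
            sq_sum_le_card_mul_sum_sq
        _ = (Finset.univ.card : ℝ) * ∑ x : Fin l → α, Z x := by
            congr 1; exact Finset.sum_congr rfl fun x _ => Real.sq_sqrt (hZ0 x)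
        _ ≤ N * 1 := by
            apply mul_le_mul
            · rw [hN, Finset.card_univ, Fintype.card_fun, hq]; push_cast
              simp [Fintype.card_fin]
            · exact hZsum
            · exact Finset.sum_nonneg fun x _ => hZ0 x
            · positivity
        _ = N := mul_one _
    -- pointwise bound
    have hpt : ∀ x, Real.sqrt (X x) ≤
        Real.sqrt lam * Real.sqrt (Y x) + Real.sqrt (1 - lam) * Real.sqrt (Z x) := by
      intro x
      rw [hcomb x, ← Real.sqrt_mul hlam0, ← Real.sqrt_mul (by linarith)]
      exact my_sqrt_add_le _ _ (mul_nonneg hlam0 (hY0 x))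
        (mul_nonneg (by linarith) (hZ0 x))
    have hsum : ∑ x : Fin l → α, Real.sqrt (X x) ≤
        Real.sqrt lam * (∑ x : Fin l → α, Real.sqrt (Y x))
        + Real.sqrt (1 - lam) * (∑ x : Fin l → α, Real.sqrt (Z x)) := by
      rw [Finset.mul_sum, Finset.mul_sum, ← Finset.sum_add_distrib]
      exact Finset.sum_le_sum fun x _ => hpt x
    set SY := ∑ x : Fin l → α, Real.sqrt (Y x) with hSY
    set SZ := ∑ x : Fin l → α, Real.sqrt (Z x) with hSZ
    have hSY0 : 0 ≤ SY := Finset.sum_nonneg fun x _ => Real.sqrt_nonneg _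
    have hSZ0 : 0 ≤ SZ := Finset.sum_nonneg fun x _ => Real.sqrt_nonneg _
    have hSYle : SY ≤ Real.sqrt (c * N) := by
      rw [← Real.sqrt_sq hSY0]
      exact Real.sqrt_le_sqrt hSYsq
    have hSZle : SZ ≤ Real.sqrt N := by
      rw [← Real.sqrt_sq hSZ0]
      exact Real.sqrt_le_sqrt hSZsq
    have hSX0 : 0 ≤ ∑ x : Fin l → α, Real.sqrt (X x) :=
      Finset.sum_nonneg fun x _ => Real.sqrt_nonneg _
    have hbound : ∑ x : Fin l → α, Real.sqrt (X x) ≤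
        Real.sqrt lam * Real.sqrt (c * N) + Real.sqrt (1 - lam) * Real.sqrt N := by
      refine hsum.trans ?_
      exact add_le_add (mul_le_mul_of_nonneg_left hSYle (Real.sqrt_nonneg _))
        (mul_le_mul_of_nonneg_left hSZle (Real.sqrt_nonneg _))
    -- square it
    have hsq : (∑ x : Fin l → α, Real.sqrt (X x)) ^ 2 ≤
        (Real.sqrt lam * Real.sqrt (c * N) + Real.sqrt (1 - lam) * Real.sqrt N) ^ 2 :=
      pow_le_pow_left₀ hSX0 hbound 2
    -- expand the square
    have hexp : (Real.sqrt lam * Real.sqrt (c * N) + Real.sqrt (1 - lam) * Real.sqrt N) ^ 2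
        = lam * (c * N) + (1 - lam) * N
          + 2 * (Real.sqrt lam * Real.sqrt (1 - lam)) * (Real.sqrt (c * N) * Real.sqrt N) := by
      have h1 : Real.sqrt lam ^ 2 = lam := Real.sq_sqrt hlam0
      have h2 : Real.sqrt (1 - lam) ^ 2 = 1 - lam := Real.sq_sqrt (by linarith)
      have h3 : Real.sqrt (c * N) ^ 2 = c * N := Real.sq_sqrt (by positivity)
      have h4 : Real.sqrt N ^ 2 = N := Real.sq_sqrt (le_of_lt hN0)
      have hr : (Real.sqrt lam * Real.sqrt (c * N) + Real.sqrt (1 - lam) * Real.sqrt N) ^ 2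
          = Real.sqrt lam ^ 2 * Real.sqrt (c * N) ^ 2
            + Real.sqrt (1 - lam) ^ 2 * Real.sqrt N ^ 2
            + 2 * (Real.sqrt lam * Real.sqrt (1 - lam)) * (Real.sqrt (c * N) * Real.sqrt N) := by
        ring
      rw [hr, h1, h2, h3, h4]
    -- the cross term
    have hcross : Real.sqrt lam * Real.sqrt (1 - lam) ≤ 1 := by
      have e1 : Real.sqrt lam ≤ 1 := Real.sqrt_le_one.mpr hlam1
      have e2 : Real.sqrt (1 - lam) ≤ 1 := Real.sqrt_le_one.mpr (by linarith)
      nlinarith [Real.sqrt_nonneg lam, Real.sqrt_nonneg (1 - lam)]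
    have hcNN : Real.sqrt (c * N) * Real.sqrt N = Real.sqrt c * N := by
      rw [← Real.sqrt_mul (by positivity) N]
      have : c * N * N = c * N ^ 2 := by ring
      rw [this, Real.sqrt_mul hc0, Real.sqrt_sq (le_of_lt hN0)]
    have final : (1 / N) * (∑ x : Fin l → α, Real.sqrt (X x)) ^ 2
        ≤ lam * c + (1 - lam) + 2 * Real.sqrt c := by
      rw [div_mul_eq_mul_div, one_mul, div_le_iff₀ hN0]
      calc (∑ x : Fin l → α, Real.sqrt (X x)) ^ 2
          ≤ lam * (c * N) + (1 - lam) * N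
            + 2 * (Real.sqrt lam * Real.sqrt (1 - lam)) * (Real.sqrt (c * N) * Real.sqrt N) := by
            rw [← hexp]; exact hsq
        _ ≤ lam * (c * N) + (1 - lam) * N + 2 * 1 * (Real.sqrt c * N) := by
            rw [hcNN]
            have h5 : (0:ℝ) ≤ Real.sqrt c * N := by positivity
            nlinarith [hcross, h5]
        _ = (lam * c + (1 - lam) + 2 * Real.sqrt c) * N := by ring
    calc (1 / ((q:ℝ) ^ l)) * (∑ x : Fin l → α, Real.sqrt (X x)) ^ 2
        ≤ lam * c + (1 - lam) + 2 * Real.sqrt c := final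
      _ = 1 - lam * (1 - c) + 2 * Real.sqrt c := by ring
      _ = 1 - lam * (1 - (d * m : ℝ) / q) + 2 * Real.sqrt ((d * m : ℝ) / q) := by rw [hc]
end

section
/- Let μ, ν be probability distributions on a finite set S, λ ∈ [0,1], and let Z = |{s : μ(s) = 0}|. If Z ≥ (1−ε)|S| for some ε ∈ [0,1], then θ_S(λμ + (1−λ)ν) ≤ 1 − λ(1−ε) + 2√ε. -/
open scoped Classical

lemma main_arith (n a b t u lam eps : ℝ)
    (hab : a + b = n) (hsplit : u + t = 1)
    (ha : (1 - eps) * n ≤ a) (ha0 : 0 ≤ a) (hb0 : 0 ≤ b)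
    (ht0 : 0 ≤ t) (hul : lam ≤ u) (hlam0 : 0 ≤ lam) :
    b * u + a * t ≤ (1 - lam * (1 - eps)) * n := by
  have hau : (1 - eps) * n * lam ≤ a * u :=
    mul_le_mul ha hul hlam0 ha0
  have hbt : 0 ≤ b * t := mul_nonneg hb0 ht0
  nlinarith [hau, hbt]

lemma sum_sqrt_le_sqrt_card_mul {α : Type*} (A : Finset α) (f : α → ℝ)
    (hf : ∀ s ∈ A, 0 ≤ f s) :
    ∑ s ∈ A, Real.sqrt (f s) ≤ Real.sqrt ((A.card : ℝ) * ∑ s ∈ A, f s) := by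
  have h : (∑ s ∈ A, Real.sqrt (f s)) ^ 2 ≤ (A.card : ℝ) * ∑ s ∈ A, f s := by
    have h2 := sq_sum_le_card_mul_sum_sq (s := A) (f := fun s => Real.sqrt (f s))
    calc (∑ s ∈ A, Real.sqrt (f s)) ^ 2
        ≤ (A.card : ℝ) * ∑ s ∈ A, Real.sqrt (f s) ^ 2 := by exact_mod_cast h2
      _ = (A.card : ℝ) * ∑ s ∈ A, f s := by
          congr 1
          exact Finset.sum_congr rfl fun s hs => Real.sq_sqrt (hf s hs)
  have hnn : 0 ≤ ∑ s ∈ A, Real.sqrt (f s) :=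
    Finset.sum_nonneg fun s _ => Real.sqrt_nonneg _
  have hy : 0 ≤ (A.card : ℝ) * ∑ s ∈ A, f s :=
    mul_nonneg (Nat.cast_nonneg _) (Finset.sum_nonneg hf)
  exact (Real.le_sqrt hnn hy).mpr h

theorem theta_mixture_zero_bound {α : Type*} (S : Finset α) (hS : S.Nonempty)
    (mu nu : α → ℝ) (hmu0 : ∀ s ∈ S, 0 ≤ mu s) (hnu0 : ∀ s ∈ S, 0 ≤ nu s)
    (hmusum : ∑ s ∈ S, mu s = 1) (hnusum : ∑ s ∈ S, nu s = 1)
    (lam : ℝ) (hlam0 : 0 ≤ lam) (hlam1 : lam ≤ 1)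
    (eps : ℝ) (heps0 : 0 ≤ eps) (heps1 : eps ≤ 1)
    (hZ : (1 - eps) * (S.card : ℝ) ≤ ((S.filter (fun s => mu s = 0)).card : ℝ)) :
    (1 / (S.card : ℝ)) * (∑ s ∈ S, Real.sqrt (lam * mu s + (1 - lam) * nu s)) ^ 2
      ≤ 1 - lam * (1 - eps) + 2 * Real.sqrt eps := by
  classical
  set n : ℝ := (S.card : ℝ) with hn
  have hn0 : (0:ℝ) < n := by
    have h : 0 < S.card := Finset.card_pos.mpr hS
    rw [hn]
    exact_mod_cast h
  set f : α → ℝ := fun s => lam * mu s + (1 - lam) * nu s with hfdef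
  set A := S.filter (fun s => mu s = 0) with hAdef
  set B := S \ A with hBdef
  have hAS : A ⊆ S := Finset.filter_subset _ _
  have hBS : B ⊆ S := Finset.sdiff_subset
  have hfnn : ∀ s ∈ S, 0 ≤ f s := fun s hs =>
    add_nonneg (mul_nonneg hlam0 (hmu0 s hs)) (mul_nonneg (by linarith) (hnu0 s hs))
  have hsumf : ∑ s ∈ S, f s = 1 := by
    simp only [hfdef, Finset.sum_add_distrib, ← Finset.mul_sum, hmusum, hnusum]
    ring
  set t := ∑ s ∈ A, f s with htdef
  set u := ∑ s ∈ B, f s with hudef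
  have hsplit : u + t = 1 := by rw [← hsumf, hudef, htdef, hBdef]; exact Finset.sum_sdiff hAS
  have ht0 : 0 ≤ t := Finset.sum_nonneg fun s hs => hfnn s (hAS hs)
  have hu0 : 0 ≤ u := Finset.sum_nonneg fun s hs => hfnn s (hBS hs)
  have ht1 : t ≤ 1 - lam := by
    have hteq : t = (1 - lam) * ∑ s ∈ A, nu s := by
      rw [htdef, Finset.mul_sum]
      refine Finset.sum_congr rfl fun s hs => ?_
      have hmz : mu s = 0 := by
        have := (Finset.mem_filter.mp (by rwa [hAdef] at hs)).2
        exact this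
      simp [hfdef, hmz]
    have h1 : ∑ s ∈ A, nu s ≤ 1 := by
      rw [← hnusum]
      exact Finset.sum_le_sum_of_subset_of_nonneg hAS (fun s hs _ => hnu0 s hs)
    have h2 : 0 ≤ ∑ s ∈ A, nu s :=
      Finset.sum_nonneg fun s hs => hnu0 s (hAS hs)
    rw [hteq]
    nlinarith
  set a : ℝ := (A.card : ℝ) with hadef
  set b : ℝ := (B.card : ℝ) with hbdef
  have ha0 : 0 ≤ a := by positivity
  have hb0 : 0 ≤ b := by positivity
  have hcard : A.card + B.card = S.card := by
    have h1 := Finset.card_sdiff_of_subset hAS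
    have h2 := Finset.card_le_card hAS
    rw [hBdef] at *
    omega
  have hab : a + b = n := by
    rw [hadef, hbdef, hn]
    exact_mod_cast hcard
  have ha : (1 - eps) * n ≤ a := hZ
  have han : a ≤ n := by
    rw [hadef, hn]
    exact_mod_cast Finset.card_le_card hAS
  -- Cauchy-Schwarz on each part
  have hCSA : ∑ s ∈ A, Real.sqrt (f s) ≤ Real.sqrt (a * t) :=
    sum_sqrt_le_sqrt_card_mul A f fun s hs => hfnn s (hAS hs)
  have hCSB : ∑ s ∈ B, Real.sqrt (f s) ≤ Real.sqrt (b * u) :=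
    sum_sqrt_le_sqrt_card_mul B f fun s hs => hfnn s (hBS hs)
  have hsum_split : ∑ s ∈ S, Real.sqrt (f s)
      = ∑ s ∈ B, Real.sqrt (f s) + ∑ s ∈ A, Real.sqrt (f s) := by
    rw [hBdef]; exact (Finset.sum_sdiff hAS).symm
  have hsumle : ∑ s ∈ S, Real.sqrt (f s) ≤ Real.sqrt (b * u) + Real.sqrt (a * t) := by
    rw [hsum_split]; exact add_le_add hCSB hCSA
  have hsumnn : 0 ≤ ∑ s ∈ S, Real.sqrt (f s) :=
    Finset.sum_nonneg fun s _ => Real.sqrt_nonneg _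
  have hsq : (∑ s ∈ S, Real.sqrt (f s)) ^ 2 ≤ (Real.sqrt (b * u) + Real.sqrt (a * t)) ^ 2 :=
    pow_le_pow_left₀ hsumnn hsumle 2
  have hbu : 0 ≤ b * u := mul_nonneg hb0 hu0
  have hat : 0 ≤ a * t := mul_nonneg ha0 ht0
  have hexp : (Real.sqrt (b * u) + Real.sqrt (a * t)) ^ 2
      = b * u + a * t + 2 * Real.sqrt (b * u * (a * t)) := by
    rw [add_sq, Real.sq_sqrt hbu, Real.sq_sqrt hat, mul_assoc, ← Real.sqrt_mul hbu]
    ring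
  -- bound cross term
  have hbeps : b ≤ eps * n := by nlinarith [hab, ha]
  have ht1' : t ≤ 1 := by linarith
  have hu1 : u ≤ 1 := by linarith
  have hcross_arg : b * u * (a * t) ≤ eps * n ^ 2 := by
    have h1 : b * u ≤ eps * n := le_trans (mul_le_of_le_one_right hb0 hu1) hbeps
    have h2 : a * t ≤ n := le_trans (mul_le_of_le_one_right ha0 ht1') han
    calc b * u * (a * t) ≤ (eps * n) * n := mul_le_mul h1 h2 hat (mul_nonneg heps0 hn0.le)
      _ = eps * n ^ 2 := by ring
  have hcross : Real.sqrt (b * u * (a * t)) ≤ Real.sqrt eps * n := by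
    calc Real.sqrt (b * u * (a * t)) ≤ Real.sqrt (eps * n ^ 2) :=
          Real.sqrt_le_sqrt hcross_arg
      _ = Real.sqrt eps * n := by
          rw [Real.sqrt_mul heps0, Real.sqrt_sq hn0.le]
  -- bound main term
  have hul : lam ≤ u := by linarith
  clear_value n t u a b
  have hmain : b * u + a * t ≤ (1 - lam * (1 - eps)) * n :=
    main_arith n a b t u lam eps hab hsplit ha ha0 hb0 ht0 hul hlam0
  -- combine
  have hkey : (∑ s ∈ S, Real.sqrt (f s)) ^ 2 ≤ (1 - lam * (1 - eps) + 2 * Real.sqrt eps) * n := by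
    calc (∑ s ∈ S, Real.sqrt (f s)) ^ 2
        ≤ b * u + a * t + 2 * Real.sqrt (b * u * (a * t)) := by rw [← hexp]; exact hsq
      _ ≤ (1 - lam * (1 - eps)) * n + 2 * (Real.sqrt eps * n) := by linarith
      _ = (1 - lam * (1 - eps) + 2 * Real.sqrt eps) * n := by ring
  calc (1 / n) * (∑ s ∈ S, Real.sqrt (f s)) ^ 2
      ≤ (1 / n) * ((1 - lam * (1 - eps) + 2 * Real.sqrt eps) * n) := by
        apply mul_le_mul_of_nonneg_left hkey
        positivity
    _ = 1 - lam * (1 - eps) + 2 * Real.sqrt eps := by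
        field_simp
end
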